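/- Let M be a matroid on a finite ground set E, let C be a cocircuit of M, and let v ∈ C. Then J(M ⧸ {v}) : x_C = SF₂(J(M)) : x_C = ⋂_{F basis of M with |F ∩ C| = 1} p_{F \ C}. In particular, the ideal J(M ⧸ {v}) : x_C does not depend on the choice of v ∈ C, and it equals the cover ideal of the cofocal matroid of the basic 1-cover given by the indicator function of C (the matroid whose bases are the sets F \ C for F a basis of M with |F ∩ C| = 1). -/

import Mathlib

open Matroid MvPolynomial

/-- The squarefree monomial `x_S = ∏_{i ∈ S} x_i`. -/
noncomputable def xS {α : Type*} [Fintype α] (K : Type*) [Field K] (S : Set α) :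
    MvPolynomial α K :=
  ∏ i ∈ S.toFinite.toFinset, MvPolynomial.X i

/-- The monomial `x^γ = ∏ i, x_i ^ γ(i)`. -/
noncomputable def xPow {α : Type*} [Fintype α] (K : Type*) [Field K] (γ : α → ℕ) :
    MvPolynomial α K :=
  ∏ i : α, (MvPolynomial.X i : MvPolynomial α K) ^ γ i

/-- `p_S`: the ideal of `K[x_i : i ∈ α]` generated by the variables `x_i`, `i ∈ S`. -/
noncomputable def pS {α : Type*} (K : Type*) [Field K] (S : Set α) :
    Ideal (MvPolynomial α K) :=
  Ideal.span (MvPolynomial.X '' S)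

/-- The cover ideal `J(M) = ⋂_{F basis of M} p_F` of a matroid `M`. -/
noncomputable def coverIdeal {α : Type*} [Fintype α] (K : Type*) [Field K] (M : Matroid α) :
    Ideal (MvPolynomial α K) :=
  ⨅ F ∈ {F : Set α | M.IsBase F}, pS K F

/-- The `ℓ`-th symbolic power `J(M)^{(ℓ)} = ⋂_{F basis of M} p_F^ℓ` of the cover ideal. -/
noncomputable def symbPow {α : Type*} [Fintype α] (K : Type*) [Field K] (M : Matroid α)
    (ℓ : ℕ) : Ideal (MvPolynomial α K) :=
  ⨅ F ∈ {F : Set α | M.IsBase F}, (pS K F) ^ ℓ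

/-- `SF_ℓ(J(M))`: the ideal generated by the squarefree monomials of `J(M)^{(ℓ)}`, i.e. by the
monomials `x_S` with `|S ∩ F| ≥ ℓ` for every basis `F` of `M`. -/
noncomputable def SF {α : Type*} [Fintype α] (K : Type*) [Field K] (M : Matroid α)
    (ℓ : ℕ) : Ideal (MvPolynomial α K) :=
  Ideal.span {m : MvPolynomial α K |
    ∃ S : Set α, m = xS K S ∧ ∀ F : Set α, M.IsBase F → ℓ ≤ (S ∩ F).ncard}

/-- Matroid deletion: `M ⧹ D` is the restriction of `M` to `M.E \ D`. -/
def mdel {α : Type*} (M : Matroid α) (D : Set α) : Matroid α := M ↾ (M.E \ D)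

/-- Matroid contraction: `M ⧸ C = (M✶ ⧹ C)✶`. -/
def mcon {α : Type*} (M : Matroid α) (C : Set α) : Matroid α := (mdel M✶ C)✶

/-- A cocircuit of `M`: a minimal subset of the ground set meeting every basis of `M`. -/
def IsCocircuit {α : Type*} (M : Matroid α) (C : Set α) : Prop :=
  C ⊆ M.E ∧ (∀ F, M.IsBase F → (C ∩ F).Nonempty) ∧
    ∀ C' : Set α, C' ⊂ C → ∃ F, M.IsBase F ∧ C' ∩ F = ∅

/-!
The bases of `M ⧸ {v}` are the sets `B ∌ v` with `insert v B` a base of `M`. Those meeting `C`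
contain a variable dividing `x_C` and impose no condition on `J(M ⧸ {v}) : x_C`; those missing
`C` are the sets `F \ C` with `F ∩ C = {v}`, and exchanging along the cocircuit `C` shows that
every `F \ C` with `|F ∩ C| = 1` is of this form. As `x_C` is a nonzerodivisor modulo the prime
`p_{F \ C}`, the colon by `x_C` of `p_{F \ C}` is `p_{F \ C}` itself.

For `SF₂(J(M))`: a generator `x_S` meets every base twice, hence meets `F \ C` when
`|F ∩ C| = 1`. Conversely, if `f` lies in every such `p_{F \ C}`, each monomial of `x_C f` is
divisible by `x_{C ∪ supp}`, and `C ∪ supp` meets every base `F` twice: in two points of `C`, or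
in the point of `F ∩ C` and a point of `F \ C`.
-/

namespace Matroid

variable {α : Type*} {M : Matroid α} {B K : Set α} {u w : α}

lemma IsCocircuit.isBase_insert_sdiff (hK : M.IsCocircuit K) (hB : M.IsBase B)
    (hBK : B ∩ K = {w}) (hu : u ∈ K) : M.IsBase (insert u (B \ K)) := by
  have hwB : w ∈ B := (hBK.symm.subset rfl).1
  have hsdiff : B \ K = B \ {w} := by rw [← Set.sdiff_self_inter, hBK]
  rw [hsdiff]
  refine hB.exchange_base_of_notMem_closure hwB (fun hucl => ?_) (hK.subset_ground hu)
  -- otherwise the fundamental circuit of `u` would meet `K` in `{u}` only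
  have huB : u ∉ B \ {w} := fun h => h.2 (hBK.subset ⟨h.1, hu⟩)
  refine (hB.indep.subset Set.sdiff_subset).fundCircuit_isCircuit hucl huB
    |>.inter_isCocircuit_ne_singleton hK (e := u) ?_
  refine Set.Subset.antisymm (fun x ⟨hxZ, hxK⟩ => ?_) (by simp [mem_fundCircuit, hu])
  rcases M.fundCircuit_subset_insert u _ hxZ with rfl | ⟨hxB, hxw⟩
  · rfl
  · exact absurd (hBK.subset ⟨hxB, hxK⟩) hxw

lemma IsCocircuit.two_le_ncard_union_inter [Finite α] {A F : Set α}
    (hK : M.IsCocircuit K) (hF : M.IsBase F)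
    (hA : (F ∩ K).ncard = 1 → (A ∩ (F \ K)).Nonempty) : 2 ≤ ((K ∪ A) ∩ F).ncard := by
  by_cases hFK : (F ∩ K).ncard = 1
  · obtain ⟨w, hw⟩ := Set.ncard_eq_one.1 hFK
    obtain ⟨i, hiA, hiF, hiK⟩ := hA hFK
    have hwK : w ∈ K := (hw.symm.subset rfl).2
    have hpair : {w, i} ⊆ (K ∪ A) ∩ F := by
      rintro y (rfl | rfl)
      · exact ⟨Or.inl hwK, (hw.symm.subset rfl).1⟩
      · exact ⟨Or.inr hiA, hiF⟩
    calc 2 = ({w, i} : Set α).ncard := (Set.ncard_pair (by rintro rfl; exact hiK hwK)).symm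
      _ ≤ _ := Set.ncard_le_ncard hpair
  · have hpos : 0 < (F ∩ K).ncard := (Set.ncard_pos).2 <| Set.inter_comm K F ▸
      (isCocircuit_iff_minimal.1 hK).prop F hF
    have hsub : F ∩ K ⊆ (K ∪ A) ∩ F := fun x hx => ⟨Or.inl hx.2, hx.1⟩
    calc 2 ≤ (F ∩ K).ncard := by omega
      _ ≤ _ := Set.ncard_le_ncard hsub

end Matroid

lemma mcon_eq_contract {α : Type*} (M : Matroid α) (C : Set α) : mcon M C = M ／ C := rfl

lemma IsCocircuit.isCocircuit {α : Type*} {M : Matroid α} {C : Set α}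
    (hC : _root_.IsCocircuit M C) : M.IsCocircuit C := by
  rw [isCocircuit_iff_minimal, Set.minimal_iff_forall_ssubset]
  refine ⟨hC.2.1, fun C' hC' hmeet => ?_⟩
  obtain ⟨F, hF, hC'F⟩ := hC.2.2 C' hC'
  exact (hmeet F hF).ne_empty hC'F

lemma mem_pS_iff {α K : Type*} [Field K] {S : Set α} {f : MvPolynomial α K} :
    f ∈ pS K S ↔ ∀ d ∈ f.support, ∃ i ∈ S, d i ≠ 0 :=
  mem_ideal_span_X_image

section MonomialIdeals

variable {α : Type*} [Fintype α] {K : Type*} [Field K]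

noncomputable def chi (S : Set α) : α →₀ ℕ :=
  ∑ i ∈ S.toFinite.toFinset, Finsupp.single i 1

lemma chi_apply (S : Set α) (j : α) : chi S j = S.indicator 1 j := by
  classical
  simp [chi, Finsupp.finsetSum_apply, Finsupp.single_apply, Set.indicator_apply]

lemma xS_eq_monomial (S : Set α) : xS K S = monomial (chi S) 1 := by
  rw [xS, chi, monomial_sum_one]
  rfl

lemma xS_mem_pS {S A : Set α} (h : (S ∩ A).Nonempty) : xS K S ∈ pS K A := by
  classical
  obtain ⟨j, hjS, hjA⟩ := h
  rw [mem_pS_iff, xS_eq_monomial, support_monomial, if_neg one_ne_zero]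
  simpa [chi_apply] using ⟨j, hjA, hjS⟩

lemma xS_mul_mem_pS_iff {A C : Set α} (hAC : Disjoint A C) {f : MvPolynomial α K} :
    xS K C * f ∈ pS K A ↔ f ∈ pS K A := by
  refine ⟨fun h => mem_pS_iff.2 fun d hd => ?_, Ideal.mul_mem_left _ _⟩
  have hCd : chi C + d ∈ (xS K C * f).support := by
    rwa [mem_support_iff, xS_eq_monomial, coeff_monomial_mul, one_mul, ← mem_support_iff]
  obtain ⟨i, hiA, hi⟩ := mem_pS_iff.1 h _ hCd
  refine ⟨i, hiA, ?_⟩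
  simpa [chi_apply, hAC.notMem_of_mem_left hiA] using hi

lemma mem_SF_iff {M : Matroid α} {ℓ : ℕ} {f : MvPolynomial α K} :
    f ∈ SF K M ℓ ↔
      ∀ d ∈ f.support, ∃ S : Set α, (∀ F, M.IsBase F → ℓ ≤ (S ∩ F).ncard) ∧ chi S ≤ d := by
  have hspan : SF K M ℓ = Ideal.span ((fun d => monomial d (1 : K)) ''
      (chi '' {S | ∀ F, M.IsBase F → ℓ ≤ (S ∩ F).ncard})) := by
    rw [SF, Set.image_image]
    congr 1
    ext m
    simp only [xS_eq_monomial, Set.mem_ofPred_eq, Set.mem_image, eq_comm]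
    exact exists_congr fun _ => and_comm
  rw [hspan, mem_ideal_span_monomial_image]
  simp

lemma SF_le_pS {M : Matroid α} {ℓ : ℕ} {F A : Set α} (hF : M.IsBase F)
    (hA : (F \ A).ncard < ℓ) : SF K M ℓ ≤ pS K A := by
  refine Ideal.span_le.2 ?_
  rintro _ ⟨S, rfl, hS⟩
  refine xS_mem_pS (Set.not_disjoint_iff_nonempty_inter.1 fun hSA => ?_)
  have hsub : S ∩ F ⊆ F \ A := fun x hx => ⟨hx.2, hSA.notMem_of_mem_left hx.1⟩
  have := Set.ncard_le_ncard hsub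
  have := hS F hF
  omega

end MonomialIdeals

section CoverIdeals

variable {α : Type*} [Fintype α] {K : Type*} [Field K] {M : Matroid α} {C : Set α}

theorem colon_coverIdeal_contract_eq {v : α} (hC : M.IsCocircuit C) (hv : v ∈ C) :
    (coverIdeal K (M ／ {v})).colon (Ideal.span {xS K C}) =
      ⨅ F ∈ {F : Set α | M.IsBase F ∧ (F ∩ C).ncard = 1}, pS K (F \ C) := by
  have hbase : ∀ B, (M ／ {v}).IsBase B ↔ M.IsBase (insert v B) ∧ v ∉ B := fun B => by
    rw [(hC.isNonloop_of_mem hv).indep.contract_isBase_iff, Set.union_singleton,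
      Set.disjoint_singleton_right]
  ext f
  simp only [Ideal.mem_colon_span_singleton, coverIdeal, Submodule.mem_iInf, Set.mem_ofPred_eq,
    and_imp, hbase]
  constructor
  · intro h F hF hFC
    obtain ⟨w, hw⟩ := Set.ncard_eq_one.1 hFC
    rw [← xS_mul_mem_pS_iff Set.disjoint_sdiff_left, mul_comm]
    exact h _ (hC.isBase_insert_sdiff hF hw hv) fun hvFC => hvFC.2 hv
  · intro h B hB hvB
    rcases Set.disjoint_or_nonempty_inter B C with hBC | hBC
    · have hinter : insert v B ∩ C = {v} := by
        rw [Set.insert_inter_of_mem hv, hBC.inter_eq, insert_empty_eq]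
      have hsdiff : insert v B \ C = B := by
        rw [Set.insert_sdiff_of_mem _ hv, hBC.sdiff_eq_left]
      have := h _ hB (by rw [hinter, Set.ncard_singleton])
      rw [hsdiff] at this
      exact Ideal.mul_mem_right _ _ this
    · exact Ideal.mul_mem_left _ _ (xS_mem_pS (Set.inter_comm B C ▸ hBC))

theorem colon_SF_two_eq (hC : M.IsCocircuit C) :
    (SF K M 2).colon (Ideal.span {xS K C}) =
      ⨅ F ∈ {F : Set α | M.IsBase F ∧ (F ∩ C).ncard = 1}, pS K (F \ C) := by
  classical
  ext f
  simp only [Ideal.mem_colon_span_singleton, Submodule.mem_iInf, Set.mem_ofPred_eq, and_imp]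
  constructor
  · intro h F hF hFC
    rw [← xS_mul_mem_pS_iff Set.disjoint_sdiff_left, mul_comm]
    exact SF_le_pS hF (by rw [Set.sdiff_sdiff_right_self, hFC]; omega) h
  · intro h
    rw [mul_comm, mem_SF_iff]
    intro e he
    obtain ⟨d, hd, rfl⟩ : ∃ d ∈ f.support, chi C + d = e := by
      simpa [xS_eq_monomial, support_monomial, Finset.mem_add] using support_mul _ _ he
    refine ⟨C ∪ {i | d i ≠ 0}, fun F hF => hC.two_le_ncard_union_inter hF fun hFC => ?_, ?_⟩
    · obtain ⟨i, hi, hdi⟩ := mem_pS_iff.1 (h F hF hFC) d hd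
      exact ⟨i, hdi, hi⟩
    · intro i
      simp only [chi_apply, Finsupp.add_apply, Set.indicator_apply]
      split_ifs <;> simp_all; omega

end CoverIdeals

theorem stmt18_general {α : Type*} [Fintype α] (K : Type*) [Field K]
    (M : Matroid α)
    (C : Set α) (hC : _root_.IsCocircuit M C) (v : α) (hv : v ∈ C) :
    Submodule.colon (coverIdeal K (mcon M {v})) (Ideal.span {xS K C}) =
      Submodule.colon (SF K M 2) (Ideal.span {xS K C}) ∧
    Submodule.colon (coverIdeal K (mcon M {v})) (Ideal.span {xS K C}) =
      ⨅ F ∈ {F : Set α | M.IsBase F ∧ (F ∩ C).ncard = 1}, pS K (F \ C) := by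
  rw [mcon_eq_contract]
  have hcolon := colon_coverIdeal_contract_eq (K := K) hC.isCocircuit hv
  exact ⟨hcolon.trans (colon_SF_two_eq hC.isCocircuit).symm, hcolon⟩

/-- let `C` be a cocircuit of `M` and `v ∈ C`. Then
`J(M ⧸ {v}) : x_C = SF₂(J(M)) : x_C = ⋂_{F basis, |F ∩ C| = 1} p_{F \ C}`.
In particular `J(M ⧸ {v}) : x_C` does not depend on the choice of `v ∈ C`, and it is the cover
ideal of the cofocal matroid of the basic 1-cover given by the indicator function of `C`. -/
theorem stmt18 {α : Type*} [Fintype α] (K : Type*) [Field K]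
    (M : Matroid α) (hE : M.E = Set.univ)
    (C : Set α) (hC : _root_.IsCocircuit M C) (v : α) (hv : v ∈ C) :
    Submodule.colon (coverIdeal K (mcon M {v})) (Ideal.span {xS K C}) =
      Submodule.colon (SF K M 2) (Ideal.span {xS K C}) ∧
    Submodule.colon (coverIdeal K (mcon M {v})) (Ideal.span {xS K C}) =
      ⨅ F ∈ {F : Set α | M.IsBase F ∧ (F ∩ C).ncard = 1}, pS K (F \ C) :=
  stmt18_general K M C hC v hv
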